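/- Let d ≥ 1 and let ŷ_j be computed from inputs y_{j-l},...,y_{j-1} (with l = 2^d) by a binary tree of depth d where each node outputs (a+b)/2 of its two children (ReLU activations are identities since all inputs are nonnegative), the two children of the node at layer i, position s·2^i being the nodes at layer i−1, positions s·2^i and (2s+1)·2^{i-1}. Then ŷ_j = (1/2^d) · Σ_{i=1}^{2^d} y_{j-i}, i.e., the output equals the arithmetic mean of the last 2^d inputs. -/
import Mathlib


/-- Binary averaging tree of depth `d` on inputs `y 0, ..., y (2^d - 1)`:
each node outputs the average of its two children. -/
noncomputable def avgTree : ℕ → (ℕ → ℝ) → ℝ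
  | 0, y => y 0
  | d + 1, y => (avgTree d y + avgTree d (fun i => y (i + 2 ^ d))) / 2

lemma avgTree_eq_sum (d : ℕ) (y : ℕ → ℝ) :
    avgTree d y = (1 / (2 : ℝ) ^ d) * ∑ i ∈ Finset.range (2 ^ d), y i := by
  induction d generalizing y with
  | zero => simp [avgTree]
  | succ d ih =>
    rw [avgTree, ih, ih]
    rw [show 2 ^ (d + 1) = 2 ^ d + 2 ^ d by ring, Finset.sum_range_add, pow_succ]
    simp only [Nat.add_comm (2 ^ d)]
    ring

/-- Proposition 1 (LeveledInit): the output of the depth-`d` binary averaging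
tree applied to the window `y (j - l), ..., y (j - 1)` (with `l = 2^d`) equals
the arithmetic mean `(1/2^d) * ∑_{i=1}^{2^d} y (j - i)`. -/
theorem avgTree_window_eq_mean (d : ℕ) (hd : 1 ≤ d) (j : ℕ) (y : ℕ → ℝ)
    (hj : 2 ^ d ≤ j) :
    avgTree d (fun i => y (j - 2 ^ d + i)) =
      (1 / (2 : ℝ) ^ d) * ∑ i ∈ Finset.Icc 1 (2 ^ d), y (j - i) := by
  rw [avgTree_eq_sum]
  congr 1
  apply Finset.sum_nbij' (fun i => 2 ^ d - i) (fun k => 2 ^ d - k)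
  · intro a ha
    simp only [Finset.mem_range] at ha
    simp only [Finset.mem_Icc]
    omega
  · intro a ha
    simp only [Finset.mem_Icc] at ha
    simp only [Finset.mem_range]
    omega
  · intro a ha; simp only [Finset.mem_range] at ha; omega
  · intro a ha; simp only [Finset.mem_Icc] at ha; omega
  · intro a ha
    simp only [Finset.mem_range] at ha
    congr 1
    omega
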